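/- arXiv:1505.01548 — 2 statements merged into one kernel-verified Lean document; each statement's English description precedes it below -/
import Mathlib

section
/- Let a > 0 and let L = (ℓ_j)_{j≥1} be the fractal string with ℓ_j = j^{−a} − (j+1)^{−a} (the a-string, whose boundary is {0} ∪ {j^{−a} : j ≥ 1}). Then the Minkowski dimension of L is D = 1/(a+1), and L is Minkowski measurable with Minkowski content M = 2^{1−D} a^D / (1−D). -/
open Filter Topology

/-- A fractal string: a nonincreasing, positive, summable sequence of lengths
`ℓ 0 ≥ ℓ 1 ≥ ⋯ > 0` (indexed from `0`, representing `ℓ_1, ℓ_2, …`). -/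
def IsFractalString (ℓ : ℕ → ℝ) : Prop :=
  (∀ j, 0 < ℓ j) ∧ Antitone ℓ ∧ Summable ℓ

/-- The volume `V(ε) = ∑ⱼ min(ℓⱼ, 2ε)` of the inner ε-neighborhood of the boundary. -/
noncomputable def stringVol (ℓ : ℕ → ℝ) (ε : ℝ) : ℝ :=
  ∑' j, min (ℓ j) (2 * ε)

/-- Upper `d`-dimensional Minkowski content `limsup_{ε→0⁺} V(ε)/ε^{1-d}`. -/
noncomputable def upperContent (ℓ : ℕ → ℝ) (d : ℝ) : ENNReal :=
  Filter.limsup (fun ε : ℝ => ENNReal.ofReal (stringVol ℓ ε / ε ^ (1 - d))) (𝓝[>] 0)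

/-- Lower `d`-dimensional Minkowski content `liminf_{ε→0⁺} V(ε)/ε^{1-d}`. -/
noncomputable def lowerContent (ℓ : ℕ → ℝ) (d : ℝ) : ENNReal :=
  Filter.liminf (fun ε : ℝ => ENNReal.ofReal (stringVol ℓ ε / ε ^ (1 - d))) (𝓝[>] 0)

/-- The Minkowski dimension `D = inf {d ≥ 0 : M*_d < ∞}`. -/
noncomputable def minkDim (ℓ : ℕ → ℝ) : ℝ :=
  sInf {d : ℝ | 0 ≤ d ∧ upperContent ℓ d < ⊤}

/-- The spectral (frequency) counting function `N_ν(x) = ∑ⱼ ⌊ℓⱼ x⌋`. -/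
noncomputable def spectralCount (ℓ : ℕ → ℝ) (x : ℝ) : ℝ :=
  ∑' j, (⌊ℓ j * x⌋₊ : ℝ)

/-- The Weyl term `W(x) = (∑ⱼ ℓⱼ) x`. -/
noncomputable def weylTerm (ℓ : ℕ → ℝ) (x : ℝ) : ℝ :=
  (∑' j, ℓ j) * x

/-- The geometric counting function `N_L(x) = #{j ≥ 1 : ℓⱼ⁻¹ ≤ x}`. -/
noncomputable def geomCount (ℓ : ℕ → ℝ) (x : ℝ) : ℝ :=
  (({j : ℕ | (ℓ j)⁻¹ ≤ x}).ncard : ℝ)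

/-- The "asymptotic second term" `φ_ν(x) = W(x) - N_ν(x)`. -/
noncomputable def phiNu (ℓ : ℕ → ℝ) (x : ℝ) : ℝ :=
  weylTerm ℓ x - spectralCount ℓ x

/-- `L` is Minkowski measurable (in dimension `D`) with Minkowski content `M`:
`V(ε)/ε^{1-D} → M` as `ε → 0⁺`. -/
def MinkMeasurableWith (ℓ : ℕ → ℝ) (D M : ℝ) : Prop :=
  Tendsto (fun ε : ℝ => stringVol ℓ ε / ε ^ (1 - D)) (𝓝[>] (0:ℝ)) (𝓝 M)

/-- `L` is Minkowski measurable in dimension `D` (with some positive finite content). -/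
def MinkMeasurable (ℓ : ℕ → ℝ) (D : ℝ) : Prop :=
  ∃ M : ℝ, 0 < M ∧ MinkMeasurableWith ℓ D M

/-- Hypothesis (6.1): `N_ν(x) = W(x) - C x^D + o(x^D)` as `x → +∞`. -/
def SpectralAsymp (ℓ : ℕ → ℝ) (D C : ℝ) : Prop :=
  Tendsto (fun x : ℝ => (spectralCount ℓ x - (weylTerm ℓ x - C * x ^ D)) / x ^ D)
    atTop (𝓝 0)

/-- The inverse spectral problem `(ISP)_D`: every fractal string of Minkowski
dimension `D` satisfying (6.1) is Minkowski measurable. -/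
def ISP (D : ℝ) : Prop :=
  ∀ ℓ : ℕ → ℝ, IsFractalString ℓ → minkDim ℓ = D →
    (∃ C : ℝ, C ≠ 0 ∧ SpectralAsymp ℓ D C) → MinkMeasurable ℓ D

/-!
Let `J(ε)` be the number of lengths exceeding `2ε`; then `V(ε) = 2εJ(ε) + ∑_{j ≥ J(ε)} ℓ_j`,
and for the `a`-string the tail telescopes to `(J(ε) + 1)^{-a}`. By the mean value theorem
`a (j+2)^{-(a+1)} ≤ ℓ_j ≤ a (j+1)^{-(a+1)}`, so `J(ε) = (a/2ε)^D + O(1)` with `D = 1/(a+1)`.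
Hence `V(ε)/ε^{1-D} = 2 J(ε)ε^D + ((J(ε) + 1)ε^D)^{-a} → 2N + N^{-a}` with `N = (a/2)^D`,
which is the stated content. A positive finite limit in dimension `D` makes `V(ε)/ε^{1-d}`
tend to `∞` for `d < D` and stay bounded for `d ≥ D`, so `D` is the Minkowski dimension.
-/

lemma div_rpow_one_sub_mul_rpow_sub (V : ℝ) {ε : ℝ} (hε : 0 < ε) (d D : ℝ) :
    V / ε ^ (1 - D) * ε ^ (d - D) = V / ε ^ (1 - d) := by
  rw [show 1 - D = (1 - d) + (d - D) by ring, Real.rpow_add hε]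
  have := Real.rpow_pos_of_pos hε (d - D)
  field_simp

lemma tendsto_stringVol_div_rpow_of_rescaled {ℓ : ℕ → ℝ} {d D : ℝ} {l : Filter ℝ}
    (h : Tendsto (fun ε => stringVol ℓ ε / ε ^ (1 - D) * ε ^ (d - D)) (𝓝[>] 0) l) :
    Tendsto (fun ε => stringVol ℓ ε / ε ^ (1 - d)) (𝓝[>] 0) l :=
  h.congr' <| eventually_mem_nhdsWithin.mono fun _ hε =>
    div_rpow_one_sub_mul_rpow_sub _ hε d D

lemma tendsto_rpow_nhdsGT_zero {p : ℝ} (hp : 0 ≤ p) :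
    Tendsto (fun ε : ℝ => ε ^ p) (𝓝[>] 0) (𝓝 (0 ^ p)) :=
  (Real.continuousAt_rpow_const 0 p (Or.inr hp)).tendsto.mono_left nhdsWithin_le_nhds

namespace MinkMeasurableWith

variable {ℓ : ℕ → ℝ} {D M : ℝ}

lemma upperContent_lt_top (h : MinkMeasurableWith ℓ D M) {d : ℝ} (hd : D ≤ d) :
    upperContent ℓ d < ⊤ := by
  have h' := tendsto_stringVol_div_rpow_of_rescaled
    (h.mul (tendsto_rpow_nhdsGT_zero (sub_nonneg.2 hd)))
  rw [upperContent, (ENNReal.tendsto_ofReal h').limsup_eq]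
  exact ENNReal.ofReal_lt_top

lemma upperContent_eq_top (h : MinkMeasurableWith ℓ D M) (hM : 0 < M) {d : ℝ} (hd : d < D) :
    upperContent ℓ d = ⊤ :=
  (ENNReal.tendsto_ofReal_atTop.comp <| tendsto_stringVol_div_rpow_of_rescaled <|
    h.pos_mul_atTop hM (tendsto_rpow_neg_nhdsGT_zero (sub_neg.2 hd))).limsup_eq

lemma minkDim_eq (h : MinkMeasurableWith ℓ D M) (hD : 0 ≤ D) (hM : 0 < M) :
    minkDim ℓ = D := by
  have hset : {d | 0 ≤ d ∧ upperContent ℓ d < ⊤} = Set.Ici D := by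
    ext d
    refine ⟨fun ⟨_, hd⟩ => Set.mem_Ici.2 <| not_lt.1 fun hlt => ?_,
      fun hd => ⟨hD.trans hd, h.upperContent_lt_top hd⟩⟩
    exact hd.ne (h.upperContent_eq_top hM hlt)
  rw [minkDim, hset, csInf_Ici]

end MinkMeasurableWith

lemma Antitone.hasSum_sub_succ {f : ℕ → ℝ} {l : ℝ} (hf : Antitone f)
    (hl : Tendsto f atTop (𝓝 l)) : HasSum (fun n => f n - f (n + 1)) (f 0 - l) := by
  refine (hasSum_iff_tendsto_nat_of_nonneg (fun n => sub_nonneg.2 (hf n.le_succ)) _).2 ?_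
  simp only [Finset.sum_range_sub']
  exact tendsto_const_nhds.sub hl

lemma le_mul_rpow_neg_iff {a c p x : ℝ} (ha : 0 ≤ a) (hc : 0 < c) (hp : 0 < p) (hx : 0 < x) :
    c ≤ a * x ^ (-p) ↔ x ≤ (a / c) ^ (1 / p) := by
  rw [Real.rpow_neg hx.le, ← div_eq_mul_inv, le_div_iff₀ (by positivity), mul_comm,
    ← le_div_iff₀ hc, one_div, Real.le_rpow_inv_iff_of_pos hx.le (by positivity) hp]

lemma mul_rpow_neg_le_iff {a c p x : ℝ} (ha : 0 ≤ a) (hc : 0 < c) (hp : 0 < p) (hx : 0 < x) :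
    a * x ^ (-p) ≤ c ↔ (a / c) ^ (1 / p) ≤ x := by
  rw [Real.rpow_neg hx.le, ← div_eq_mul_inv, div_le_iff₀ (by positivity), mul_comm,
    ← div_le_iff₀ hc, one_div, Real.rpow_inv_le_iff_of_pos (by positivity) hx.le hp]

lemma rpow_neg_sub_rpow_neg_mem_Icc {a x : ℝ} (ha : 0 ≤ a) (hx : 0 < x) :
    x ^ (-a) - (x + 1) ^ (-a) ∈ Set.Icc (a * (x + 1) ^ (-(a + 1))) (a * x ^ (-(a + 1))) := by
  obtain ⟨c, ⟨hxc, hc1⟩, hc⟩ := exists_hasDerivAt_eq_slope (fun t : ℝ => t ^ (-a))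
    (fun t => -a * t ^ (-a - 1)) (lt_add_one x)
    (continuousOn_id.rpow_const fun t ht => Or.inl (hx.trans_le ht.1).ne')
    (fun t ht => Real.hasDerivAt_rpow_const (Or.inl (hx.trans ht.1).ne'))
  have hmvt : x ^ (-a) - (x + 1) ^ (-a) = a * c ^ (-(a + 1)) := by
    rw [add_sub_cancel_left, div_one] at hc
    rw [neg_add']
    linarith
  have hexp : -(a + 1) ≤ 0 := by linarith
  rw [hmvt]
  exact ⟨mul_le_mul_of_nonneg_left
      (Real.rpow_le_rpow_of_nonpos (hx.trans hxc) hc1.le hexp) ha,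
    mul_le_mul_of_nonneg_left (Real.rpow_le_rpow_of_nonpos hx hxc.le hexp) ha⟩

/-- For antitone `ℓ` tending to `0`, the number of lengths exceeding `δ`. -/
noncomputable def countGt (ℓ : ℕ → ℝ) (δ : ℝ) : ℕ :=
  sInf {j | ℓ j ≤ δ}

lemma lt_of_lt_countGt {ℓ : ℕ → ℝ} {δ : ℝ} {j : ℕ} (hj : j < countGt ℓ δ) : δ < ℓ j :=
  not_le.1 (Nat.notMem_of_lt_sInf hj)

namespace IsFractalString

variable {ℓ : ℕ → ℝ}

lemma le_of_countGt_le (hℓ : IsFractalString ℓ) {δ : ℝ} (hδ : 0 < δ) {j : ℕ}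
    (hj : countGt ℓ δ ≤ j) : ℓ j ≤ δ := by
  have hne : {j | ℓ j ≤ δ}.Nonempty :=
    (hℓ.2.2.tendsto_atTop_zero.eventually (eventually_le_nhds hδ)).exists
  exact (hℓ.2.1 hj).trans (Nat.sInf_mem hne)

lemma stringVol_eq (hℓ : IsFractalString ℓ) {ε : ℝ} (hε : 0 < ε) :
    stringVol ℓ ε = 2 * ε * countGt ℓ (2 * ε) + ∑' i, ℓ (i + countGt ℓ (2 * ε)) := by
  set J := countGt ℓ (2 * ε)
  have hsum : Summable fun j => min (ℓ j) (2 * ε) :=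
    hℓ.2.2.of_nonneg_of_le (fun j => le_min (hℓ.1 j).le (by positivity))
      fun j => min_le_left _ _
  have hhead : ∀ i ∈ Finset.range J, min (ℓ i) (2 * ε) = 2 * ε := fun i hi =>
    min_eq_right (lt_of_lt_countGt (Finset.mem_range.1 hi)).le
  have htail : ∀ i, min (ℓ (i + J)) (2 * ε) = ℓ (i + J) := fun i =>
    min_eq_left (hℓ.le_of_countGt_le (by positivity) (Nat.le_add_left J i))
  rw [stringVol, ← hsum.sum_add_tsum_nat_add J, Finset.sum_congr rfl hhead, tsum_congr htail,
    Finset.sum_const, Finset.card_range, nsmul_eq_mul, mul_comm (J : ℝ)]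

end IsFractalString

noncomputable def aString (a : ℝ) (j : ℕ) : ℝ :=
  ((j : ℝ) + 1) ^ (-a) - ((j : ℝ) + 2) ^ (-a)

namespace aString

variable {a : ℝ}

lemma mem_Icc (ha : 0 ≤ a) (j : ℕ) :
    aString a j ∈
      Set.Icc (a * ((j : ℝ) + 2) ^ (-(a + 1))) (a * ((j : ℝ) + 1) ^ (-(a + 1))) := by
  have h := rpow_neg_sub_rpow_neg_mem_Icc ha (show 0 < (j : ℝ) + 1 by positivity)
  rwa [add_assoc, one_add_one_eq_two] at h

lemma pos (ha : 0 < a) (j : ℕ) : 0 < aString a j :=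
  lt_of_lt_of_le (by positivity) (mem_Icc ha.le j).1

lemma antitone (ha : 0 ≤ a) : Antitone (aString a) := by
  refine antitone_nat_of_succ_le fun j => (mem_Icc ha (j + 1)).2.trans ?_
  rw [Nat.cast_succ, add_assoc, one_add_one_eq_two]
  exact (mem_Icc ha j).1

lemma hasSum_tail (ha : 0 < a) (J : ℕ) :
    HasSum (fun i => aString a (i + J)) (((J : ℝ) + 1) ^ (-a)) := by
  set g : ℕ → ℝ := fun i => ((i : ℝ) + J + 1) ^ (-a)
  have hg : ∀ i, aString a (i + J) = g i - g (i + 1) := fun i => by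
    simp only [aString, g]
    push_cast
    ring_nf
  have hanti : Antitone g := antitone_nat_of_succ_le fun i => by
    have := pos ha (i + J)
    rw [hg] at this
    linarith
  have hlim : Tendsto g atTop (𝓝 0) :=
    (tendsto_rpow_neg_atTop ha).comp <| tendsto_atTop_add_const_right _ _ <|
      tendsto_atTop_add_const_right _ _ tendsto_natCast_atTop_atTop
  simpa [hg, g] using hanti.hasSum_sub_succ hlim

lemma isFractalString (ha : 0 < a) : IsFractalString (aString a) :=
  ⟨pos ha, antitone ha.le, by simpa using (hasSum_tail ha 0).summable⟩

lemma stringVol_eq (ha : 0 < a) {ε : ℝ} (hε : 0 < ε) :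
    stringVol (aString a) ε = 2 * ε * countGt (aString a) (2 * ε)
      + ((countGt (aString a) (2 * ε) : ℝ) + 1) ^ (-a) := by
  rw [(isFractalString ha).stringVol_eq hε, (hasSum_tail ha _).tsum_eq]

lemma countGt_le (ha : 0 < a) {ε : ℝ} (hε : 0 < ε) :
    (countGt (aString a) (2 * ε) : ℝ) ≤ (a / (2 * ε)) ^ (1 / (a + 1)) := by
  set J := countGt (aString a) (2 * ε)
  rcases Nat.eq_zero_or_pos J with hJ | hJ
  · rw [hJ, Nat.cast_zero]
    positivity
  have h := (lt_of_lt_countGt (Nat.sub_one_lt hJ.ne')).le.trans (mem_Icc ha.le (J - 1)).2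
  rw [Nat.cast_sub hJ, Nat.cast_one, sub_add_cancel] at h
  exact (le_mul_rpow_neg_iff ha.le (by positivity) (by positivity) (by positivity)).1 h

lemma le_countGt_add_two (ha : 0 < a) {ε : ℝ} (hε : 0 < ε) :
    (a / (2 * ε)) ^ (1 / (a + 1)) ≤ (countGt (aString a) (2 * ε) : ℝ) + 2 :=
  (mul_rpow_neg_le_iff ha.le (by positivity) (by positivity) (by positivity)).1 <|
    (mem_Icc ha.le _).1.trans ((isFractalString ha).le_of_countGt_le (by positivity) le_rfl)


lemma tendsto_countGt_mul_rpow (ha : 0 < a) :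
    Tendsto (fun ε : ℝ => (countGt (aString a) (2 * ε) : ℝ) * ε ^ (1 / (a + 1))) (𝓝[>] 0)
      (𝓝 ((a / 2) ^ (1 / (a + 1)))) := by
  set D := 1 / (a + 1)
  have hD : 0 < D := by positivity
  have hscale (ε : ℝ) (hε : 0 < ε) : (a / (2 * ε)) ^ D * ε ^ D = (a / 2) ^ D := by
    rw [← Real.mul_rpow (by positivity) hε.le]
    field_simp
  have hlower :
      Tendsto (fun ε : ℝ => (a / 2) ^ D - 2 * ε ^ D) (𝓝[>] 0) (𝓝 ((a / 2) ^ D)) := by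
    simpa [Real.zero_rpow hD.ne'] using
      tendsto_const_nhds.sub ((tendsto_rpow_nhdsGT_zero hD.le).const_mul 2)
  refine tendsto_of_tendsto_of_tendsto_of_le_of_le' hlower tendsto_const_nhds ?_ ?_
  all_goals filter_upwards [self_mem_nhdsWithin] with ε (hε : 0 < ε)
  · calc (a / 2) ^ D - 2 * ε ^ D = ((a / (2 * ε)) ^ D - 2) * ε ^ D := by
          rw [sub_mul, hscale ε hε]
      _ ≤ countGt (aString a) (2 * ε) * ε ^ D := by
        gcongr
        linarith [le_countGt_add_two ha hε]
  · calc countGt (aString a) (2 * ε) * ε ^ D ≤ (a / (2 * ε)) ^ D * ε ^ D := by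
          gcongr
          exact countGt_le ha hε
      _ = (a / 2) ^ D := hscale ε hε

lemma stringVol_div_rpow (ha : 0 < a) {ε : ℝ} (hε : 0 < ε) :
    stringVol (aString a) ε / ε ^ (1 - 1 / (a + 1)) =
      2 * (countGt (aString a) (2 * ε) * ε ^ (1 / (a + 1)))
        + (((countGt (aString a) (2 * ε) : ℝ) + 1) * ε ^ (1 / (a + 1))) ^ (-a) := by
  set e := ε ^ (1 / (a + 1))
  have he : 0 < e := by positivity
  have hε_eq : ε = e ^ a * e := by
    rw [← Real.rpow_add_one he.ne', ← Real.rpow_mul hε.le]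
    field_simp
    simp
  have hε_pow : ε ^ (1 - 1 / (a + 1)) = e ^ a := by
    rw [← Real.rpow_mul hε.le]
    congr 1
    field_simp
    ring
  rw [stringVol_eq ha hε, hε_pow, Real.mul_rpow (by positivity) he.le, Real.rpow_neg he.le]
  nth_rw 1 [hε_eq]
  have : 0 < e ^ a := by positivity
  field_simp


lemma minkMeasurableWith (ha : 0 < a) :
    MinkMeasurableWith (aString a) (1 / (a + 1))
      (2 * (a / 2) ^ (1 / (a + 1)) + ((a / 2) ^ (1 / (a + 1))) ^ (-a)) := by
  have hD : 0 < 1 / (a + 1) := by positivity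
  have hN : 0 < (a / 2) ^ (1 / (a + 1)) := by positivity
  have hJ := tendsto_countGt_mul_rpow ha
  have hJ1 := hJ.add (tendsto_rpow_nhdsGT_zero hD.le)
  simp only [← add_one_mul, Real.zero_rpow hD.ne', add_zero] at hJ1
  refine ((hJ.const_mul 2).add
    ((Real.continuousAt_rpow_const _ (-a) (Or.inl hN.ne')).tendsto.comp hJ1)).congr' ?_
  filter_upwards [self_mem_nhdsWithin] with ε hε
  exact (stringVol_div_rpow ha hε).symm

lemma content_eq (ha : 0 < a) :
    2 * (a / 2) ^ (1 / (a + 1)) + ((a / 2) ^ (1 / (a + 1))) ^ (-a) =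
      2 ^ (1 - 1 / (a + 1)) * a ^ (1 / (a + 1)) / (1 - 1 / (a + 1)) := by
  have h1 : ((a / 2) ^ (1 / (a + 1))) ^ (-a) = (a / 2) ^ (1 / (a + 1)) * (2 / a) := by
    rw [← Real.rpow_mul (by positivity), show 1 / (a + 1) * -a = 1 / (a + 1) - 1 by
      field_simp; ring, Real.rpow_sub (by positivity), Real.rpow_one, div_div_eq_mul_div]
    ring
  have h2 : (2 : ℝ) ^ (1 - 1 / (a + 1)) * a ^ (1 / (a + 1)) = 2 * (a / 2) ^ (1 / (a + 1)) := by
    rw [Real.rpow_sub two_pos, Real.rpow_one, Real.div_rpow ha.le zero_le_two]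
    ring
  have h3 : 1 - 1 / (a + 1) = a / (a + 1) := by
    field_simp
    ring
  rw [h1, h2, h3]
  field_simp

end aString

/-- (The `a`-string) For `a > 0`, the fractal string with
lengths `ℓ_j = j^{-a} - (j+1)^{-a}` has Minkowski dimension `D = 1/(a+1)` and is
Minkowski measurable with Minkowski content `M = 2^{1-D} a^D / (1-D)`. -/
theorem a_string_dimension_and_content (a : ℝ) (ha : 0 < a) :
    minkDim (fun j : ℕ => ((j : ℝ) + 1) ^ (-a) - ((j : ℝ) + 2) ^ (-a)) = 1 / (a + 1) ∧
    MinkMeasurableWith (fun j : ℕ => ((j : ℝ) + 1) ^ (-a) - ((j : ℝ) + 2) ^ (-a))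
      (1 / (a + 1))
      (2 ^ (1 - 1 / (a + 1)) * a ^ (1 / (a + 1)) / (1 - 1 / (a + 1))) := by
  have h := aString.minkMeasurableWith ha
  refine ⟨h.minkDim_eq (by positivity) (by positivity), ?_⟩
  exact aString.content_eq ha ▸ h
end

section
/- Let L be the Cantor string, i.e., the fractal string whose lengths are 3^{−(n+1)} repeated with multiplicity 2^n for n = 0, 1, 2, … (the lengths of the complementary intervals of the ternary Cantor set in [0,1]). Then the Minkowski dimension of L is D = log 2 / log 3, and L is Minkowski nondegenerate but not Minkowski measurable: 0 < M_* < M^* < ∞ with M_* ≠ M^*. -/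
/-!
If `3 ^ -(N + 1) < 2ε ≤ 3 ^ -N`, exactly `2 ^ N - 1` lengths of the Cantor string exceed `2ε` and
the remaining ones sum to `(2 / 3) ^ N`, so `V(ε) = 2ε (2 ^ N - 1) + (2 / 3) ^ N`. For
`D = log₃ 2` both terms are comparable to `ε ^ (1 - D)`, which gives the dimension and
`0 < M_* ≤ M^* < ∞`. The ratio `V(ε) / ε ^ (1 - D)` oscillates, though: along `ε = 3 ^ -N / 2` it
tends to `2 ^ (2 - D)`, while along `ε = 3 ^ -N / 4` it stays below `(3 / 2) 4 ^ (1 - D)`, which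
is smaller because `2 ^ D > 3 / 2`.
-/

open Filter Topology

/-- The Cantor string: the lengths `3^{-(n+1)}` repeated with multiplicity `2^n`
(`n = 0, 1, 2, …`), listed in nonincreasing order; the `j`-th length (indexed
from `0`) is `3^{-(⌊log₂(j+1)⌋ + 1)}`. -/
noncomputable def cantorString (j : ℕ) : ℝ :=
  (3 : ℝ) ^ (-((Nat.log 2 (j + 1) : ℤ) + 1))


open Real

noncomputable def minkowskiRatio (ℓ : ℕ → ℝ) (d ε : ℝ) : ℝ :=
  stringVol ℓ ε / ε ^ (1 - d)

section MinkowskiContent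

variable {ℓ : ℕ → ℝ} {d : ℝ}

theorem stringVol_eq_mul_add_tsum_nat_add {ε : ℝ} {n : ℕ} (hℓ : Summable ℓ)
    (hhead : ∀ j < n, 2 * ε ≤ ℓ j) (htail : ∀ j, n ≤ j → ℓ j ≤ 2 * ε) :
    stringVol ℓ ε = n * (2 * ε) + ∑' k, ℓ (k + n) := by
  have htail_eq : (fun k => min (ℓ (k + n)) (2 * ε)) = fun k => ℓ (k + n) :=
    funext fun k => min_eq_left (htail _ (Nat.le_add_left n k))
  have hsum : Summable fun j => min (ℓ j) (2 * ε) := by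
    rw [← summable_nat_add_iff n, htail_eq]
    exact (summable_nat_add_iff n).2 hℓ
  rw [stringVol, ← hsum.sum_add_tsum_nat_add n, htail_eq,
    Finset.sum_congr rfl fun j hj => min_eq_right (hhead j (Finset.mem_range.1 hj))]
  simp

theorem upperContent_lt_top_of_eventually_le {C : ℝ}
    (h : ∀ᶠ ε in 𝓝[>] 0, stringVol ℓ ε ≤ C * ε ^ (1 - d)) : upperContent ℓ d < ⊤ := by
  refine lt_of_le_of_lt (limsup_le_of_le (by isBoundedDefault) ?_)
    (ENNReal.ofReal_lt_top (r := C))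
  filter_upwards [h, self_mem_nhdsWithin] with ε hε (hε0 : 0 < ε)
  exact ENNReal.ofReal_le_ofReal ((div_le_iff₀ (rpow_pos_of_pos hε0 _)).2 hε)

theorem ofReal_le_lowerContent {c : ℝ}
    (h : ∀ᶠ ε in 𝓝[>] 0, c * ε ^ (1 - d) ≤ stringVol ℓ ε) :
    ENNReal.ofReal c ≤ lowerContent ℓ d := by
  refine le_liminf_of_le (by isBoundedDefault) ?_
  filter_upwards [h, self_mem_nhdsWithin] with ε hε (hε0 : 0 < ε)
  exact ENNReal.ofReal_le_ofReal ((le_div_iff₀ (rpow_pos_of_pos hε0 _)).2 hε)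

theorem upperContent_eq_top_of_lt {c D : ℝ} (hc : 0 < c) (hd : d < D)
    (h : ∀ᶠ ε in 𝓝[>] 0, c * ε ^ (1 - D) ≤ stringVol ℓ ε) : upperContent ℓ d = ⊤ := by
  have hpow : Tendsto (fun ε : ℝ => c * ε ^ (d - D)) (𝓝[>] 0) atTop :=
    (tendsto_rpow_neg_nhdsGT_zero (sub_neg.2 hd)).const_mul_atTop hc
  have hratio : Tendsto (minkowskiRatio ℓ d) (𝓝[>] 0) atTop := by
    refine tendsto_atTop_mono' _ ?_ hpow
    filter_upwards [h, self_mem_nhdsWithin] with ε hε (hε0 : 0 < ε)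
    rwa [minkowskiRatio, le_div_iff₀ (rpow_pos_of_pos hε0 _), mul_assoc, ← rpow_add hε0,
      show d - D + (1 - d) = 1 - D by ring]
  exact (ENNReal.tendsto_ofReal_atTop.comp hratio).limsup_eq

theorem minkDim_eq_of_eventually_le {c C D : ℝ} (hD : 0 ≤ D) (hc : 0 < c)
    (hlow : ∀ᶠ ε in 𝓝[>] 0, c * ε ^ (1 - D) ≤ stringVol ℓ ε)
    (hup : ∀ᶠ ε in 𝓝[>] 0, stringVol ℓ ε ≤ C * ε ^ (1 - D)) : minkDim ℓ = D := by
  have hmem : D ∈ {d | 0 ≤ d ∧ upperContent ℓ d < ⊤} :=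
    ⟨hD, upperContent_lt_top_of_eventually_le hup⟩
  refine le_antisymm (csInf_le ⟨0, fun d hd => hd.1⟩ hmem) (le_csInf ⟨D, hmem⟩ fun d hd => ?_)
  by_contra! hdD
  exact hd.2.ne (upperContent_eq_top_of_lt hc hdD hlow)

theorem lowerContent_le_of_frequently {a : ℝ}
    (h : ∃ᶠ ε in 𝓝[>] 0, minkowskiRatio ℓ d ε ≤ a) :
    lowerContent ℓ d ≤ ENNReal.ofReal a :=
  liminf_le_of_frequently_le' (h.mono fun _ => ENNReal.ofReal_le_ofReal)

theorem ofReal_le_upperContent_of_frequently {b : ℝ}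
    (h : ∃ᶠ ε in 𝓝[>] 0, b ≤ minkowskiRatio ℓ d ε) :
    ENNReal.ofReal b ≤ upperContent ℓ d :=
  le_limsup_of_frequently_le' (h.mono fun _ => ENNReal.ofReal_le_ofReal)

end MinkowskiContent

section CantorString

theorem cantorString_eq_pow (j : ℕ) :
    cantorString j = (1 / 3 : ℝ) ^ (Nat.log 2 (j + 1) + 1) := by
  rw [cantorString, ← Nat.cast_succ, zpow_neg, zpow_natCast, one_div, inv_pow]

theorem cantorString_pos (j : ℕ) : 0 < cantorString j := by
  rw [cantorString_eq_pow]
  positivity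

theorem cantorString_of_le_of_lt {j N : ℕ} (h₁ : 2 ^ N ≤ j + 1) (h₂ : j + 1 < 2 ^ (N + 1)) :
    cantorString j = (1 / 3 : ℝ) ^ (N + 1) := by
  rw [cantorString_eq_pow, Nat.log_eq_of_pow_le_of_lt_pow h₁ h₂]

theorem pow_le_cantorString {j N : ℕ} (h : j + 1 < 2 ^ N) :
    (1 / 3 : ℝ) ^ N ≤ cantorString j := by
  rw [cantorString_eq_pow]
  exact pow_le_pow_of_le_one (by norm_num) (by norm_num) (Nat.log_lt_of_lt_pow (by omega) h)

theorem cantorString_le_pow {j N : ℕ} (h : 2 ^ N ≤ j + 1) :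
    cantorString j ≤ (1 / 3 : ℝ) ^ (N + 1) := by
  rw [cantorString_eq_pow]
  exact pow_le_pow_of_le_one (by norm_num) (by norm_num)
    (Nat.succ_le_succ (Nat.le_log_of_pow_le (by norm_num) h))

theorem sum_range_cantorString (N : ℕ) :
    ∑ j ∈ Finset.range (2 ^ N - 1), cantorString j = 1 - (2 / 3 : ℝ) ^ N := by
  induction N with
  | zero => simp
  | succ N ih =>
    have h1 : 1 ≤ 2 ^ N := Nat.one_le_two_pow
    have h2 : 2 ^ (N + 1) = 2 * 2 ^ N := by ring
    have hblock : ∑ j ∈ Finset.Ico (2 ^ N - 1) (2 ^ (N + 1) - 1), cantorString j =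
        2 ^ N * (1 / 3 : ℝ) ^ (N + 1) := by
      rw [Finset.sum_congr rfl fun j hj => cantorString_of_le_of_lt (N := N) (by grind) (by grind),
        Finset.sum_const, Nat.card_Ico, nsmul_eq_mul]
      congr 1
      rw [show 2 ^ (N + 1) - 1 - (2 ^ N - 1) = 2 ^ N by omega]
      push_cast
      rfl
    have h23 : (2 / 3 : ℝ) ^ N = 2 ^ N * (1 / 3) ^ N := by rw [← mul_pow]; norm_num
    rw [← Finset.sum_range_add_sum_Ico _ (by omega : 2 ^ N - 1 ≤ 2 ^ (N + 1) - 1), ih, hblock,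
      pow_succ, pow_succ, h23]
    ring

theorem summable_cantorString : Summable cantorString := by
  refine summable_of_sum_range_le (c := 1) (fun j => (cantorString_pos j).le) fun n => ?_
  calc ∑ j ∈ Finset.range n, cantorString j
      ≤ ∑ j ∈ Finset.range (2 ^ n - 1), cantorString j :=
        Finset.sum_le_sum_of_subset_of_nonneg
          (Finset.range_subset_range.2 (by have := Nat.lt_two_pow_self (n := n); omega))
          fun j _ _ => (cantorString_pos j).le
    _ = 1 - (2 / 3 : ℝ) ^ n := sum_range_cantorString n
    _ ≤ 1 := by linarith [pow_nonneg (by norm_num : (0 : ℝ) ≤ 2 / 3) n]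

theorem tsum_cantorString : ∑' j, cantorString j = 1 := by
  have hsub : Tendsto (fun N => 2 ^ N - 1) atTop atTop :=
    tendsto_atTop_mono (fun N => by have := Nat.lt_two_pow_self (n := N); dsimp; omega) tendsto_id
  refine tendsto_nhds_unique (summable_cantorString.hasSum.tendsto_sum_nat.comp hsub) ?_
  simp only [Function.comp_def, sum_range_cantorString]
  simpa using tendsto_const_nhds.sub
    (tendsto_pow_atTop_nhds_zero_of_lt_one (by norm_num : (0 : ℝ) ≤ 2 / 3) (by norm_num))

theorem tsum_cantorString_add (N : ℕ) :
    ∑' k, cantorString (k + (2 ^ N - 1)) = (2 / 3 : ℝ) ^ N := by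
  have h := summable_cantorString.sum_add_tsum_nat_add (2 ^ N - 1)
  rw [tsum_cantorString, sum_range_cantorString] at h
  linarith

theorem stringVol_cantorString {ε : ℝ} {N : ℕ} (h₁ : (1 / 3 : ℝ) ^ (N + 1) < 2 * ε)
    (h₂ : 2 * ε ≤ (1 / 3 : ℝ) ^ N) :
    stringVol cantorString ε = 2 * ε * (2 ^ N - 1) + (2 / 3 : ℝ) ^ N := by
  have h1 : 1 ≤ 2 ^ N := Nat.one_le_two_pow
  rw [stringVol_eq_mul_add_tsum_nat_add summable_cantorString (n := 2 ^ N - 1)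
    (fun j hj => h₂.trans (pow_le_cantorString (by omega)))
    (fun j hj => (cantorString_le_pow (by omega)).trans h₁.le), tsum_cantorString_add,
    Nat.cast_sub h1]
  push_cast
  ring

end CantorString

section CantorDimension

theorem logb_three_two_pos : 0 < logb 3 2 := logb_pos (by norm_num) (by norm_num)

theorem logb_three_two_lt_one : logb 3 2 < 1 := by
  rw [logb_lt_iff_lt_rpow (by norm_num) (by norm_num), rpow_one]
  norm_num

theorem three_halves_lt_two_rpow_logb : 3 / 2 < (2 : ℝ) ^ logb 3 2 := by
  have hlog3 : 0 < log 3 := log_pos (by norm_num)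
  -- the claim amounts to `logb 2 3 < (1 + √5) / 2`, and `3 ^ 5 < 2 ^ 8` gives `logb 2 3 < 8 / 5`
  have h243 : 5 * log 3 < 8 * log 2 := by
    have := log_lt_log (by norm_num) (by norm_num : (3 : ℝ) ^ 5 < 2 ^ 8)
    rwa [log_pow, log_pow, Nat.cast_ofNat, Nat.cast_ofNat] at this
  rw [lt_rpow_iff_log_lt (by norm_num) (by norm_num), log_div (by norm_num) (by norm_num),
    ← log_div_log, div_mul_eq_mul_div, lt_div_iff₀ hlog3]
  nlinarith

theorem one_third_pow_rpow_logb (N : ℕ) : ((1 / 3 : ℝ) ^ N) ^ logb 3 2 = (1 / 2) ^ N := by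
  rw [← rpow_pow_comm (by norm_num), one_div, one_div, inv_rpow (by norm_num),
    rpow_logb (by norm_num) (by norm_num) (by norm_num)]

theorem one_third_pow_rpow_one_sub_logb (N : ℕ) :
    ((1 / 3 : ℝ) ^ N) ^ (1 - logb 3 2) = (2 / 3) ^ N := by
  rw [rpow_sub (by positivity), rpow_one, one_third_pow_rpow_logb, ← div_pow]
  norm_num

end CantorDimension

section CantorContent

theorem stringVol_cantorString_bounds {ε : ℝ} (hε : 0 < ε) (hε' : ε ≤ 1 / 2) :
    (2 * ε) ^ (1 - logb 3 2) ≤ stringVol cantorString ε ∧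
      stringVol cantorString ε ≤ 5 / 2 * (2 * ε) ^ (1 - logb 3 2) := by
  obtain ⟨N, hN₁, hN₂⟩ := exists_nat_pow_near_of_lt_one (by positivity : 0 < 2 * ε)
    (by linarith) (by norm_num : (0 : ℝ) < 1 / 3) (by norm_num)
  have ht : 0 < 2 * ε := by positivity
  have hD' : 0 ≤ 1 - logb 3 2 := by linarith [logb_three_two_lt_one]
  have h2N : (1 : ℝ) ≤ 2 ^ N := one_le_pow₀ (by norm_num)
  have hgeom_lower : (2 * ε) ^ (1 - logb 3 2) ≤ (2 / 3) ^ N :=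
    one_third_pow_rpow_one_sub_logb N ▸ rpow_le_rpow ht.le hN₂ hD'
  have hgeom_upper : (2 / 3) ^ (N + 1) ≤ (2 * ε) ^ (1 - logb 3 2) :=
    one_third_pow_rpow_one_sub_logb (N + 1) ▸ rpow_le_rpow (by positivity) hN₁.le hD'
  have hlinear : 2 * ε * 2 ^ N ≤ (2 * ε) ^ (1 - logb 3 2) :=
    calc 2 * ε * 2 ^ N = (2 * ε) ^ (1 - logb 3 2) * ((2 * ε) ^ logb 3 2 * 2 ^ N) := by
          rw [← mul_assoc, ← rpow_add ht]
          simp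
      _ ≤ (2 * ε) ^ (1 - logb 3 2) * (((1 / 3) ^ N) ^ logb 3 2 * 2 ^ N) := by
          gcongr
          exact logb_three_two_pos.le
      _ = (2 * ε) ^ (1 - logb 3 2) := by
          rw [one_third_pow_rpow_logb, ← mul_pow]
          norm_num
  rw [pow_succ] at hgeom_upper
  rw [stringVol_cantorString hN₁ hN₂]
  constructor <;> nlinarith

theorem eventually_stringVol_cantorString_bounds : ∀ᶠ ε in 𝓝[>] 0,
    2 ^ (1 - logb 3 2) * ε ^ (1 - logb 3 2) ≤ stringVol cantorString ε ∧
      stringVol cantorString ε ≤ 5 / 2 * 2 ^ (1 - logb 3 2) * ε ^ (1 - logb 3 2) := by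
  filter_upwards [Ioc_mem_nhdsGT (by norm_num : (0 : ℝ) < 1 / 2)] with ε ⟨hε, hε'⟩
  rw [mul_assoc, ← mul_rpow (by norm_num) hε.le]
  exact stringVol_cantorString_bounds hε hε'

theorem minkowskiRatio_cantorString_third_pow_div_two (N : ℕ) :
    minkowskiRatio cantorString (logb 3 2) ((1 / 3) ^ N / 2) =
      2 ^ (1 - logb 3 2) * (2 - (1 / 2) ^ N) := by
  have hpos : (0 : ℝ) < (1 / 3) ^ N := by positivity
  rw [minkowskiRatio, stringVol_cantorString (N := N) (by rw [pow_succ]; linarith) (by linarith),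
    div_rpow hpos.le (by norm_num), one_third_pow_rpow_one_sub_logb, div_pow, div_pow, div_pow]
  field_simp
  ring

theorem minkowskiRatio_cantorString_third_pow_div_four_le (N : ℕ) :
    minkowskiRatio cantorString (logb 3 2) ((1 / 3) ^ N / 4) ≤
      3 / 2 * 4 ^ (1 - logb 3 2) := by
  have hpos : (0 : ℝ) < (1 / 3) ^ N := by positivity
  have hV : stringVol cantorString ((1 / 3) ^ N / 4) ≤ 3 / 2 * (2 / 3) ^ N := by
    rw [stringVol_cantorString (N := N) (by rw [pow_succ]; linarith) (by linarith), div_pow,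
      div_pow, one_pow]
    field_simp
    linarith
  rw [minkowskiRatio, div_le_iff₀ (by positivity), div_rpow hpos.le (by norm_num),
    one_third_pow_rpow_one_sub_logb]
  calc _ ≤ 3 / 2 * (2 / 3) ^ N := hV
    _ = _ := by field_simp

theorem tendsto_one_third_pow_div_nhdsGT {c : ℝ} (hc : 0 < c) :
    Tendsto (fun N : ℕ => (1 / 3 : ℝ) ^ N / c) atTop (𝓝[>] 0) :=
  tendsto_nhdsWithin_iff.2
    ⟨by simpa using (tendsto_pow_atTop_nhds_zero_of_lt_one (by norm_num : (0 : ℝ) ≤ 1 / 3)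
      (by norm_num)).div_const c, Eventually.of_forall fun N => Set.mem_Ioi.2 (by positivity)⟩

theorem lowerContent_cantorString_le :
    lowerContent cantorString (logb 3 2) ≤ ENNReal.ofReal (3 / 2 * 4 ^ (1 - logb 3 2)) :=
  lowerContent_le_of_frequently <| (tendsto_one_third_pow_div_nhdsGT four_pos).frequently <|
    Frequently.of_forall minkowskiRatio_cantorString_third_pow_div_four_le

theorem ofReal_le_upperContent_cantorString (N₀ : ℕ) :
    ENNReal.ofReal (2 ^ (1 - logb 3 2) * (2 - (1 / 2) ^ N₀)) ≤
      upperContent cantorString (logb 3 2) := by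
  refine ofReal_le_upperContent_of_frequently <|
    (tendsto_one_third_pow_div_nhdsGT two_pos).frequently <|
      (eventually_ge_atTop N₀).frequently.mono fun N hN => ?_
  rw [minkowskiRatio_cantorString_third_pow_div_two]
  gcongr ?_ * (2 - ?_)
  exact pow_le_pow_of_le_one (by norm_num) (by norm_num) hN

theorem exists_three_halves_mul_four_rpow_lt :
    ∃ N : ℕ, (3 / 2 : ℝ) * 4 ^ (1 - logb 3 2) < 2 ^ (1 - logb 3 2) * (2 - (1 / 2) ^ N) := by
  have hgap : 0 < 2 - 3 / (2 : ℝ) ^ logb 3 2 := by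
    rw [sub_pos, div_lt_iff₀ (by positivity)]
    linarith [three_halves_lt_two_rpow_logb]
  obtain ⟨N, hN⟩ := exists_pow_lt_of_lt_one hgap (by norm_num : (1 / 2 : ℝ) < 1)
  refine ⟨N, ?_⟩
  have h4 : (4 : ℝ) ^ (1 - logb 3 2) = 2 ^ (1 - logb 3 2) * 2 ^ (1 - logb 3 2) := by
    rw [← mul_rpow (by norm_num) (by norm_num)]
    norm_num
  have h2 : (2 : ℝ) ^ (1 - logb 3 2) = 2 / 2 ^ logb 3 2 := by
    rw [rpow_sub (by norm_num), rpow_one]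
  rw [h4, mul_comm, mul_assoc]
  refine mul_lt_mul_of_pos_left ?_ (by positivity)
  rw [h2]
  field_simp at hN ⊢
  linarith

end CantorContent

/-- (Lapidus–Pomerance) The Cantor string has Minkowski
dimension `D = log 2 / log 3` and is Minkowski nondegenerate but not Minkowski
measurable: `0 < M_* < M^* < ∞`. -/
theorem cantorString_nondegenerate_not_measurable :
    minkDim cantorString = Real.log 2 / Real.log 3 ∧
    0 < lowerContent cantorString (Real.log 2 / Real.log 3) ∧
    lowerContent cantorString (Real.log 2 / Real.log 3) <
      upperContent cantorString (Real.log 2 / Real.log 3) ∧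
    upperContent cantorString (Real.log 2 / Real.log 3) < ⊤ := by
  rw [log_div_log]
  obtain ⟨hlow, hup⟩ := eventually_and.1 eventually_stringVol_cantorString_bounds
  obtain ⟨N, hN⟩ := exists_three_halves_mul_four_rpow_lt
  refine ⟨minkDim_eq_of_eventually_le logb_three_two_pos.le (by positivity) hlow hup,
    (ENNReal.ofReal_pos.2 (by positivity)).trans_le (ofReal_le_lowerContent hlow), ?_,
    upperContent_lt_top_of_eventually_le hup⟩
  calc lowerContent cantorString (logb 3 2)
      ≤ ENNReal.ofReal (3 / 2 * 4 ^ (1 - logb 3 2)) := lowerContent_cantorString_le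
    _ < ENNReal.ofReal (2 ^ (1 - logb 3 2) * (2 - (1 / 2) ^ N)) :=
        (ENNReal.ofReal_lt_ofReal_iff_of_nonneg (by positivity)).2 hN
    _ ≤ upperContent cantorString (logb 3 2) := ofReal_le_upperContent_cantorString N
end
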